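/- arXiv:2502.04217 — 2 statements merged into one kernel-verified Lean document; each statement's English description precedes it below -/
import Mathlib

section
/- Let C be the unitary DFT matrix and B the unitary real-imaginary mapping matrix. Then the matrix A = C^H B^H is a real orthogonal matrix, i.e., A has real entries and A^T A = A A^T = I_n. -/
/-!
Write `U = B C`, so that `A = Uᴴ`. Each row of `B` has the form `w e_s + conj w e_{-s}`
(indices mod `n`), so its rows are orthonormal, and negating its column index conjugates it.
Negating the row index of `C` conjugates it too (`ω^{-k} = conj ω^k`), so the two permutations
cancel in the product and `conj U = U`. Thus `U` is real and unitary, `Aᵀ = U`, and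
`Aᵀ A = U Uᴴ = 1`, `A Aᵀ = Uᴴ U = 1`.
-/

open Complex Matrix

/-- The real-imaginary mapping matrix `B`. -/
noncomputable def Bmat (n : ℕ) : Matrix (Fin n) (Fin n) ℂ := fun i j =>
  if i.val = 0 ∧ j.val = 0 then 1
  else if i.val = 1 ∧ j.val = n / 2 then 1
  else if 2 ≤ i.val ∧ i.val ≤ n / 2 ∧ j.val = i.val - 1 then (1 / Real.sqrt 2 : ℝ)
  else if 2 ≤ i.val ∧ i.val ≤ n / 2 ∧ j.val = n - (i.val - 1) then (1 / Real.sqrt 2 : ℝ)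
  else if n / 2 + 1 ≤ i.val ∧ i.val ≤ n - 1 ∧ j.val = i.val - n / 2 then
    -Complex.I / Real.sqrt 2
  else if n / 2 + 1 ≤ i.val ∧ i.val ≤ n - 1 ∧ j.val = n - (i.val - n / 2) then
    Complex.I / Real.sqrt 2
  else 0

noncomputable def Cmat (n : ℕ) : Matrix (Fin n) (Fin n) ℂ := fun j k =>
  (Complex.exp (-(2 * Real.pi * Complex.I) / n)) ^ (j.val * k.val) / Real.sqrt n

theorem Fin.eq_neg_iff_val_add_eq {n : ℕ} [NeZero n] {a b : Fin n} :
    a = -b ↔ a.val + b.val = 0 ∨ a.val + b.val = n := by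
  rw [eq_neg_iff_add_eq_zero, Fin.ext_iff, Fin.val_add, Fin.val_zero]
  have := a.isLt
  have := b.isLt
  constructor
  · intro h
    rcases Nat.lt_or_ge (a.val + b.val) n with hlt | hge
    · rw [Nat.mod_eq_of_lt hlt] at h
      exact Or.inl h
    · rw [Nat.mod_eq_sub_mod hge, Nat.mod_eq_of_lt (by omega)] at h
      omega
  · rintro (h | h) <;> simp [h]

theorem Matrix.map_star_mul_eq_self {l m n R : Type*} [Fintype m] [CommSemiring R] [StarRing R]
    (σ : Equiv.Perm m) {M : Matrix l m R} {N : Matrix m n R}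
    (hM : M.map star = M.submatrix id σ) (hN : N.map star = N.submatrix σ id) :
    (M * N).map star = M * N := by
  change (M * N).map (starRingEnd R) = M * N
  rw [Matrix.map_mul]
  change M.map star * N.map star = M * N
  rw [hM, hN, submatrix_mul_equiv, submatrix_id_id]

section Bmat

def bslot (n : ℕ) (i : Fin n) : Fin n :=
  ⟨if i.val = 0 then 0 else if i.val = 1 then n / 2 else if i.val ≤ n / 2 then i.val - 1
    else i.val - n / 2, by split_ifs <;> omega⟩

/-- The rows `0` and `1` have `bslot = -bslot`, so the weight `1/2` appears twice there. -/
noncomputable def bweight (n : ℕ) (i : Fin n) : ℂ :=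
  if i.val ≤ 1 then 2⁻¹ else if i.val ≤ n / 2 then ((1 / Real.sqrt 2 : ℝ) : ℂ)
  else -I / Real.sqrt 2

variable {n : ℕ} [NeZero n]

theorem Bmat_apply_eq (hev : Even n) (i k : Fin n) :
    Bmat n i k = bweight n i * (if k = bslot n i then 1 else 0) +
      starRingEnd ℂ (bweight n i) * (if k = -bslot n i then 1 else 0) := by
  obtain ⟨m, rfl⟩ := hev
  have := i.isLt
  have := k.isLt
  have hm : (m + m) / 2 = m := by omega
  simp only [Fin.eq_neg_iff_val_add_eq]
  simp only [Bmat, bslot, bweight, Fin.ext_iff, apply_ite (starRingEnd ℂ), map_inv₀, map_ofNat,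
    conj_ofReal, map_div₀, map_neg, conj_I, neg_neg, hm]
  rcases (by omega : i.val = 0 ∨ i.val = 1 ∨ (2 ≤ i.val ∧ i.val ≤ m) ∨ m < i.val) with
    h | h | h | h <;>
  · simp (disch := omega) only [if_pos, if_neg]
    split_ifs <;> first | omega | norm_num

theorem Bmat_map_star (hev : Even n) :
    (Bmat n).map star = (Bmat n).submatrix id (Equiv.neg (Fin n)) := by
  ext i k
  simp only [map_apply, submatrix_apply, id, Equiv.neg_apply, Bmat_apply_eq hev,
    Complex.star_def, map_add, map_mul, apply_ite (starRingEnd ℂ), map_one, map_zero, conj_conj,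
    neg_eq_iff_eq_neg, neg_neg]
  ring

theorem Bmat_mul_conjTranspose_apply (hev : Even n) (i j : Fin n) :
    (Bmat n * (Bmat n)ᴴ) i j =
      (if bslot n i = bslot n j then
        bweight n i * starRingEnd ℂ (bweight n j) + starRingEnd ℂ (bweight n i) * bweight n j
        else 0) +
      (if bslot n i = -bslot n j then
        bweight n i * bweight n j + starRingEnd ℂ (bweight n i) * starRingEnd ℂ (bweight n j)
        else 0) := by
  simp only [mul_apply, conjTranspose_apply, RCLike.star_def, Bmat_apply_eq hev, map_add, map_mul,
    apply_ite (starRingEnd ℂ), map_one, map_zero, conj_conj]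
  simp only [add_mul, mul_add, Finset.sum_add_distrib, ite_mul, mul_ite, mul_one, mul_zero,
    zero_mul, Finset.sum_ite_eq', Finset.mem_univ, if_true]
  have hneg : bslot n j = -bslot n i ↔ bslot n i = -bslot n j :=
    ⟨fun h => by rw [h, neg_neg], fun h => by rw [h, neg_neg]⟩
  simp only [neg_eq_iff_eq_neg, neg_neg, hneg, eq_comm (a := bslot n j)]
  split_ifs <;> ring

theorem Bmat_mul_conjTranspose (hev : Even n) : Bmat n * (Bmat n)ᴴ = 1 := by
  ext i j
  rw [Bmat_mul_conjTranspose_apply hev, one_apply]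
  obtain ⟨m, rfl⟩ := hev
  have := i.isLt
  have := j.isLt
  have hm : (m + m) / 2 = m := by omega
  have hs : ((Real.sqrt 2 : ℝ) : ℂ) ^ 2 = 2 := by
    rw [← ofReal_pow, Real.sq_sqrt zero_le_two]
    norm_num
  simp only [Fin.eq_neg_iff_val_add_eq]
  simp only [Fin.ext_iff, bslot, bweight, apply_ite (starRingEnd ℂ), map_inv₀, map_ofNat,
    conj_ofReal, map_div₀, map_neg, conj_I, neg_neg, hm]
  rcases (by omega : i.val = 0 ∨ i.val = 1 ∨ (2 ≤ i.val ∧ i.val ≤ m) ∨ m < i.val) with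
    h | h | h | h <;>
  rcases (by omega : j.val = 0 ∨ j.val = 1 ∨ (2 ≤ j.val ∧ j.val ≤ m) ∨ m < j.val) with
    h' | h' | h' | h' <;>
  · simp (disch := omega) only [if_pos, if_neg, true_or, or_true, ↓reduceIte, add_zero]
    try split_ifs
    all_goals first | omega | ((push_cast; field_simp) <;> norm_num [hs])

end Bmat

section Cmat

noncomputable def dftRoot (n : ℕ) : ℂ := exp (-(2 * Real.pi * I) / n)

theorem Cmat_apply (n : ℕ) (j k : Fin n) :
    Cmat n j k = dftRoot n ^ (j.val * k.val) / Real.sqrt n := rfl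

theorem isPrimitiveRoot_dftRoot {n : ℕ} (hn : n ≠ 0) : IsPrimitiveRoot (dftRoot n) n := by
  rw [dftRoot, neg_div, exp_neg]
  exact (isPrimitiveRoot_exp n hn).inv

theorem conj_dftRoot (n : ℕ) : starRingEnd ℂ (dftRoot n) = (dftRoot n)⁻¹ := by
  rw [dftRoot, ← exp_conj, ← exp_neg]
  congr 1
  simp only [map_div₀, map_neg, map_mul, map_ofNat, conj_ofReal, conj_I, map_natCast]
  ring

theorem sum_pow_of_pow_eq_one {K : Type*} [Field K] [DecidableEq K] {n : ℕ} {x : K}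
    (hx : x ^ n = 1) : ∑ k : Fin n, x ^ k.val = if x = 1 then (n : K) else 0 := by
  rw [Fin.sum_univ_eq_sum_range (x ^ ·)]
  split_ifs with h
  · simp [h]
  · rw [geom_sum_eq h, hx, sub_self, zero_div]

variable {n : ℕ} [NeZero n]

theorem Cmat_map_star : (Cmat n).map star = (Cmat n).submatrix (Equiv.neg (Fin n)) id := by
  have hζ := isPrimitiveRoot_dftRoot (NeZero.ne n)
  ext j k
  simp only [map_apply, submatrix_apply, id, Equiv.neg_apply, Cmat_apply, Complex.star_def,
    map_div₀, map_pow, conj_ofReal, conj_dftRoot, inv_pow]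
  congr 1
  refine inv_eq_of_mul_eq_one_left ?_
  have hdvd : n ∣ (-j).val + j.val := by
    rcases Fin.eq_neg_iff_val_add_eq.mp (rfl : -j = -j) with h | h <;> simp [h]
  rw [← pow_add, ← add_mul, pow_mul, (hζ.pow_eq_one_iff_dvd _).mpr hdvd, one_pow]

theorem Cmat_mul_conjTranspose : Cmat n * (Cmat n)ᴴ = 1 := by
  set ζ := dftRoot n
  have hζ : IsPrimitiveRoot ζ n := isPrimitiveRoot_dftRoot (NeZero.ne n)
  have hsq : ((Real.sqrt n : ℝ) : ℂ) * ((Real.sqrt n : ℝ) : ℂ) = n := by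
    rw [← ofReal_mul, Real.mul_self_sqrt (Nat.cast_nonneg n)]
    norm_cast
  ext j l
  have hx : (ζ ^ j.val * (ζ ^ l.val)⁻¹) ^ n = 1 := by
    rw [mul_pow, inv_pow, ← pow_mul, ← pow_mul, pow_mul', pow_mul', hζ.pow_eq_one, one_pow,
      one_pow, inv_one, mul_one]
  have hx1 : ζ ^ j.val * (ζ ^ l.val)⁻¹ = 1 ↔ j = l := by
    rw [mul_inv_eq_one₀ (pow_ne_zero _ (hζ.ne_zero (NeZero.ne n))), Fin.ext_iff]
    exact ⟨hζ.pow_inj j.isLt l.isLt, fun h => h ▸ rfl⟩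
  have hterm : ∀ k : Fin n, Cmat n j k * starRingEnd ℂ (Cmat n l k) =
      (ζ ^ j.val * (ζ ^ l.val)⁻¹) ^ k.val / n := by
    intro k
    rw [Cmat_apply, Cmat_apply, map_div₀, map_pow, conj_dftRoot, conj_ofReal, div_mul_div_comm,
      hsq, mul_pow, inv_pow, inv_pow, ← pow_mul, ← pow_mul]
  simp only [mul_apply, conjTranspose_apply, RCLike.star_def, hterm, ← Finset.sum_div,
    sum_pow_of_pow_eq_one hx, hx1, one_apply]
  split_ifs
  · exact div_self (Nat.cast_ne_zero.mpr (NeZero.ne n))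
  · exact zero_div _

end Cmat

/-- The matrix `A = Cᴴ Bᴴ` is real orthogonal: its entries are real and
`Aᵀ A = A Aᵀ = I`. -/
theorem Amat_real_orthogonal (n : ℕ) (hn : 0 < n) (hev : Even n)
    (A : Matrix (Fin n) (Fin n) ℂ) (hA : A = (Cmat n)ᴴ * (Bmat n)ᴴ) :
    (∀ i j, (A i j).im = 0) ∧ Aᵀ * A = 1 ∧ A * Aᵀ = 1 := by
  have : NeZero n := ⟨hn.ne'⟩
  set U := Bmat n * Cmat n
  have hU : U ∈ unitaryGroup (Fin n) ℂ :=
    mul_mem (mem_unitaryGroup_iff.mpr (Bmat_mul_conjTranspose hev))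
      (mem_unitaryGroup_iff.mpr Cmat_mul_conjTranspose)
  have hUreal : U.map star = U :=
    map_star_mul_eq_self (Equiv.neg (Fin n)) (Bmat_map_star hev) Cmat_map_star
  rw [← conjTranspose_mul] at hA
  have hAT : Aᵀ = U := by rw [hA, conjTranspose_transpose, hUreal]
  refine ⟨fun i j => ?_, ?_, ?_⟩
  · have hAij : A i j = U j i := by rw [← hAT, transpose_apply]
    rw [hAij, ← conj_eq_iff_im]
    exact congrFun (congrFun hUreal j) i
  · rw [hAT, hA]
    exact mem_unitaryGroup_iff.mp hU
  · rw [hAT, hA]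
    exact mem_unitaryGroup_iff'.mp hU
end

section
/- With P = [[I + Λ₁, Λ₂], [Λ₂, Λ₁]] and K = [[M_⊥^T M_⊥ + Λ₁, Λ₂], [Λ₂, Λ₁]], the preconditioned matrix satisfies P^{−1}K = [[I + Λ₁D^{−1}(M_⊥^T M_⊥ − I), 0], [−D^{−1}Λ₂(M_⊥^T M_⊥ − I), I]], where D = Λ₁(I + Λ₁) − Λ₂². -/
open Matrix

lemma diag_helper {n : ℕ} (l1 l2 : Fin n → ℝ) :
    Matrix.diagonal l1 * (1 + Matrix.diagonal l1) - (Matrix.diagonal l2) ^ 2 =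
      Matrix.diagonal (fun i => l1 i * (1 + l1 i) - l2 i ^ 2) := by
  ext i j
  by_cases h : i = j <;>
    simp [h, Matrix.mul_apply, Matrix.diagonal_apply, Matrix.one_apply, pow_two,
      Finset.mul_sum, mul_ite] <;> ring

lemma key_lemma {n m : ℕ} (M : Matrix (Fin m) (Fin n) ℝ) (l1 l2 d : Fin n → ℝ)
    (hd : ∀ i, d i = l1 i * (1 + l1 i) - l2 i ^ 2) (hdne : ∀ i, d i ≠ 0) :
    (Matrix.fromBlocks (1 + Matrix.diagonal l1) (Matrix.diagonal l2)
        (Matrix.diagonal l2) (Matrix.diagonal l1))⁻¹ *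
      (Matrix.fromBlocks (Mᵀ * M + Matrix.diagonal l1) (Matrix.diagonal l2)
        (Matrix.diagonal l2) (Matrix.diagonal l1)) =
    Matrix.fromBlocks
      (1 + Matrix.diagonal l1 * (Matrix.diagonal d)⁻¹ * (Mᵀ * M - 1)) 0
      (-((Matrix.diagonal d)⁻¹ * Matrix.diagonal l2 * (Mᵀ * M - 1))) 1 := by
  set a : Fin n → ℝ := fun i => (d i)⁻¹ * l1 i with ha
  set b : Fin n → ℝ := fun i => -((d i)⁻¹ * l2 i) with hb
  set c : Fin n → ℝ := fun i => (d i)⁻¹ * (1 + l1 i) with hc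
  set Q : Matrix (Fin n ⊕ Fin n) (Fin n ⊕ Fin n) ℝ :=
    Matrix.fromBlocks (Matrix.diagonal a) (Matrix.diagonal b)
      (Matrix.diagonal b) (Matrix.diagonal c) with hQ
  have hdinv : (Matrix.diagonal d)⁻¹ = Matrix.diagonal (fun i => (d i)⁻¹) := by
    refine Matrix.inv_eq_right_inv ?_
    rw [Matrix.diagonal_mul_diagonal]
    ext i j
    by_cases h : i = j
    · subst h; simp [mul_inv_cancel₀ (hdne i)]
    · simp [Matrix.diagonal_apply_ne _ h, Matrix.one_apply_ne h]
  have hQP : Q * Matrix.fromBlocks (1 + Matrix.diagonal l1) (Matrix.diagonal l2)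
      (Matrix.diagonal l2) (Matrix.diagonal l1) = 1 := by
    rw [hQ, Matrix.fromBlocks_multiply, ← Matrix.fromBlocks_one, Matrix.fromBlocks_inj]
    refine ⟨?_, ?_, ?_, ?_⟩
    · ext i j
      by_cases h : i = j <;>
        simp [h, Matrix.mul_apply, Matrix.diagonal_apply, Matrix.one_apply, Matrix.add_apply,
          ha, hb, hc]
      have h0 := hdne j
      rw [hd j] at h0 ⊢
      field_simp
      ring
    · ext i j
      by_cases h : i = j <;>
        simp [h, Matrix.mul_apply, Matrix.diagonal_apply, Matrix.one_apply, Matrix.add_apply,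
          ha, hb, hc]
      ring
    · ext i j
      by_cases h : i = j <;>
        simp [h, Matrix.mul_apply, Matrix.diagonal_apply, Matrix.one_apply, Matrix.add_apply,
          ha, hb, hc]
      ring
    · ext i j
      by_cases h : i = j <;>
        simp [h, Matrix.mul_apply, Matrix.diagonal_apply, Matrix.one_apply, Matrix.add_apply,
          ha, hb, hc]
      have h0 := hdne j
      rw [hd j] at h0 ⊢
      field_simp
      ring
  have hPinv : (Matrix.fromBlocks (1 + Matrix.diagonal l1) (Matrix.diagonal l2)
      (Matrix.diagonal l2) (Matrix.diagonal l1))⁻¹ = Q :=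
    Matrix.inv_eq_left_inv hQP
  rw [hPinv, hQ, Matrix.fromBlocks_multiply, hdinv, Matrix.fromBlocks_inj]
  refine ⟨?_, ?_, ?_, ?_⟩
  · ext i j
    by_cases h : i = j <;>
      simp [h, Matrix.mul_apply, Matrix.diagonal_apply, Matrix.one_apply, Matrix.add_apply,
        Matrix.sub_apply, ha, hb, hc, Finset.mul_sum, mul_ite, pow_two]
    · have h0 := hdne j
      rw [hd j] at h0 ⊢
      field_simp
      ring
    · exact Finset.sum_congr rfl fun x _ => by ring
  · ext i j
    by_cases h : i = j <;>
      simp [h, Matrix.mul_apply, Matrix.diagonal_apply, Matrix.one_apply, Matrix.add_apply,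
        ha, hb, hc]
    ring
  · ext i j
    by_cases h : i = j <;>
      simp [h, Matrix.mul_apply, Matrix.diagonal_apply, Matrix.one_apply, Matrix.add_apply,
        Matrix.sub_apply, Matrix.neg_apply, ha, hb, hc, Finset.mul_sum, mul_ite, pow_two] <;>
    · first
      | ring
      | exact Finset.sum_congr rfl fun x _ => by ring
      | skip
  · ext i j
    by_cases h : i = j <;>
      simp [h, Matrix.mul_apply, Matrix.diagonal_apply, Matrix.one_apply, Matrix.add_apply,
        ha, hb, hc]
    have h0 := hdne j
    rw [hd j] at h0 ⊢
    field_simp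
    ring

/-- The preconditioned KKT matrix:
`P⁻¹ K = [[I + Λ₁D⁻¹(M_⊥ᵀM_⊥ − I), 0], [−D⁻¹Λ₂(M_⊥ᵀM_⊥ − I), I]]`. -/
theorem preconditioned_kkt (n m : ℕ) (Mperp : Matrix (Fin m) (Fin n) ℝ)
    (σ₁ σ₂ : Fin n → ℝ) (h₁ : ∀ i, 0 < σ₁ i) (h₂ : ∀ i, 0 < σ₂ i) :
    let S₁ : Matrix (Fin n) (Fin n) ℝ := Matrix.diagonal σ₁
    let S₂ : Matrix (Fin n) (Fin n) ℝ := Matrix.diagonal σ₂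
    let Λ₁ := S₁ + S₂
    let Λ₂ := S₁ - S₂
    let D := Λ₁ * (1 + Λ₁) - Λ₂ ^ 2
    let P := Matrix.fromBlocks (1 + Λ₁) Λ₂ Λ₂ Λ₁
    let K := Matrix.fromBlocks (Mperpᵀ * Mperp + Λ₁) Λ₂ Λ₂ Λ₁
    P⁻¹ * K = Matrix.fromBlocks (1 + Λ₁ * D⁻¹ * (Mperpᵀ * Mperp - 1)) 0
      (-(D⁻¹ * Λ₂ * (Mperpᵀ * Mperp - 1))) 1 := by
  intro S₁ S₂ Λ₁ Λ₂ D P K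
  have hl1 : Λ₁ = Matrix.diagonal (fun i => σ₁ i + σ₂ i) := by
    simp [Λ₁, S₁, S₂, Matrix.diagonal_add]
  have hl2 : Λ₂ = Matrix.diagonal (fun i => σ₁ i - σ₂ i) := by
    simp [Λ₂, S₁, S₂, Matrix.diagonal_sub]
  have hD : D = Matrix.diagonal
      (fun i => (σ₁ i + σ₂ i) * (1 + (σ₁ i + σ₂ i)) - (σ₁ i - σ₂ i) ^ 2) := by
    show Λ₁ * (1 + Λ₁) - Λ₂ ^ 2 = _
    rw [hl1, hl2, diag_helper]
  have hdne : ∀ i, ((σ₁ i + σ₂ i) * (1 + (σ₁ i + σ₂ i)) - (σ₁ i - σ₂ i) ^ 2) ≠ 0 := by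
    intro i
    have := h₁ i
    have := h₂ i
    nlinarith
  show P⁻¹ * K = _
  rw [show P = Matrix.fromBlocks (1 + Matrix.diagonal (fun i => σ₁ i + σ₂ i))
      (Matrix.diagonal (fun i => σ₁ i - σ₂ i)) (Matrix.diagonal (fun i => σ₁ i - σ₂ i))
      (Matrix.diagonal (fun i => σ₁ i + σ₂ i)) from by rw [show P = Matrix.fromBlocks (1 + Λ₁) Λ₂ Λ₂ Λ₁ from rfl, hl1, hl2],
    show K = Matrix.fromBlocks (Mperpᵀ * Mperp + Matrix.diagonal (fun i => σ₁ i + σ₂ i))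
      (Matrix.diagonal (fun i => σ₁ i - σ₂ i)) (Matrix.diagonal (fun i => σ₁ i - σ₂ i))
      (Matrix.diagonal (fun i => σ₁ i + σ₂ i)) from by rw [show K = Matrix.fromBlocks (Mperpᵀ * Mperp + Λ₁) Λ₂ Λ₂ Λ₁ from rfl, hl1, hl2],
    hl1, hl2, hD]
  exact key_lemma Mperp _ _ _ (fun i => rfl) hdne
end
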